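/- arXiv:1501.04620 — 2 statements merged into one kernel-verified Lean document; each statement's English description precedes it below -/
import Mathlib

section
/- A loop with self-map σ is a σ-M-loop if and only if it is a σ-generalized right Bol loop satisfying the left inverse property. -/
/-- A loop: a magma with two-sided identity whose translations are bijections. -/
structure IsLoop (Q : Type*) [Mul Q] [One Q] : Prop where
  one_mul : ∀ x : Q, 1 * x = x
  mul_one : ∀ x : Q, x * 1 = x
  lbij : ∀ x : Q, Function.Bijective (fun y : Q => x * y)
  rbij : ∀ x : Q, Function.Bijective (fun y : Q => y * x)

/-- Left translation `L x : y ↦ x * y` as a permutation. -/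
noncomputable def Lt {Q : Type*} [Mul Q] [One Q] (h : IsLoop Q) (x : Q) : Equiv.Perm Q :=
  Equiv.ofBijective _ (h.lbij x)

/-- Right translation `R x : y ↦ y * x` as a permutation. -/
noncomputable def Rt {Q : Type*} [Mul Q] [One Q] (h : IsLoop Q) (x : Q) : Equiv.Perm Q :=
  Equiv.ofBijective _ (h.rbij x)

/-- The right inverse `x^ρ`, the unique solution of `x * x^ρ = 1`. -/
noncomputable def rinv {Q : Type*} [Mul Q] [One Q] (h : IsLoop Q) (x : Q) : Q :=
  (Lt h x).symm 1

/-- The left inverse `x^λ`, the unique solution of `x^λ * x = 1`. -/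
noncomputable def linv {Q : Type*} [Mul Q] [One Q] (h : IsLoop Q) (x : Q) : Q :=
  (Rt h x).symm 1

/-- σ-generalized (right) Bol identity. -/
def RightBol {Q : Type*} [Mul Q] (σ : Q → Q) : Prop :=
  ∀ x y z : Q, ((x * y) * z) * σ y = x * ((y * z) * σ y)

/-- σ-generalized left Bol identity. -/
def LeftBol {Q : Type*} [Mul Q] (σ : Q → Q) : Prop :=
  ∀ x y z : Q, σ y * (z * (y * x)) = (σ y * (z * y)) * x

/-- `(A,B,C)` is an autotopism: `A x * B y = C (x * y)`. -/
def Autotopism {Q : Type*} [Mul Q] (A B C : Equiv.Perm Q) : Prop :=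
  ∀ x y : Q, A x * B y = C (x * y)

/-!
Each side of the equivalence yields the left inverse property (from the M-identity by putting
`y = x^ρ`) and then the automorphic inverse property `(x * y)^λ = y^λ * x^λ`, so `λ` is an
involutive two-sided inverse. In such a loop every triple of maps with
`A a * B b = C (a * b)` rotates to `(λ ∘ A ∘ λ, C, B)`. The M-identity at `y` is the triple
`(L y, R (σ y), R (σ y) ∘ L y)`; it rotates to `(R y^λ, R (σ y) ∘ L y, R (σ y))`, which is the
Bol identity at `y` after the substitution `x = a * y^λ`, and rotating back recovers the
M-identity.
-/

def MIdentity {Q : Type*} [Mul Q] (σ : Q → Q) : Prop :=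
  ∀ x y z : Q, (x * y) * (z * σ x) = (x * (y * z)) * σ x

namespace IsLoop

variable {Q : Type*} [Mul Q] [One Q]

def LeftInverseProperty (h : IsLoop Q) : Prop :=
  ∀ x y : Q, linv h x * (x * y) = y

def AutomorphicInverseProperty (h : IsLoop Q) : Prop :=
  ∀ x y : Q, linv h (x * y) = linv h y * linv h x

theorem mul_left_cancel (h : IsLoop Q) {x a b : Q} (e : x * a = x * b) : a = b :=
  (h.lbij x).injective e

theorem mul_right_cancel (h : IsLoop Q) {x a b : Q} (e : a * x = b * x) : a = b :=
  (h.rbij x).injective e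

theorem linv_mul_cancel (h : IsLoop Q) (x : Q) : linv h x * x = 1 :=
  (Rt h x).apply_symm_apply 1

theorem mul_rinv_cancel (h : IsLoop Q) (x : Q) : x * rinv h x = 1 :=
  (Lt h x).apply_symm_apply 1

theorem leftInverseProperty_of_mIdentity (h : IsLoop Q) {σ : Q → Q} (M : MIdentity σ) :
    h.LeftInverseProperty := by
  have mul_rinv_cancel_left : ∀ x z : Q, x * (rinv h x * z) = z := fun x z =>
    h.mul_right_cancel (x := σ x) <| by rw [← M, h.mul_rinv_cancel, h.one_mul]
  have rinv_mul_cancel_left : ∀ x z : Q, rinv h x * (x * z) = z := fun x z =>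
    h.mul_left_cancel (mul_rinv_cancel_left x (x * z))
  have linv_eq_rinv : ∀ x : Q, linv h x = rinv h x := fun x =>
    h.mul_right_cancel (x := x) <| by
      simpa only [h.linv_mul_cancel, h.mul_one] using (rinv_mul_cancel_left x 1).symm
  intro x y
  rw [linv_eq_rinv, rinv_mul_cancel_left]

section LeftInverseProperty

variable {h : IsLoop Q}

theorem mul_linv_cancel_left (lip : h.LeftInverseProperty) (x w : Q) :
    x * (linv h x * w) = w := by
  obtain ⟨y, rfl⟩ := (h.lbij x).surjective w
  exact congrArg (x * ·) (lip x y)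

theorem mul_linv_cancel (lip : h.LeftInverseProperty) (x : Q) : x * linv h x = 1 := by
  simpa only [h.mul_one] using mul_linv_cancel_left lip x 1

theorem linv_eq_of_mul_eq_one (lip : h.LeftInverseProperty) {x y : Q} (e : x * y = 1) :
    linv h x = y := by
  rw [← lip x y, e, h.mul_one]

theorem linv_linv (lip : h.LeftInverseProperty) (x : Q) : linv h (linv h x) = x :=
  linv_eq_of_mul_eq_one lip (h.linv_mul_cancel x)

theorem linv_injective (lip : h.LeftInverseProperty) : Function.Injective (linv h) :=
  Function.LeftInverse.injective (linv_linv lip)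

theorem rotate_triple (lip : h.LeftInverseProperty) {A B C : Q → Q}
    (hABC : ∀ a b : Q, A a * B b = C (a * b)) (a b : Q) :
    linv h (A (linv h a)) * C b = B (a * b) :=
  calc linv h (A (linv h a)) * C b
      = linv h (A (linv h a)) * (A (linv h a) * B (a * b)) := by rw [hABC, lip]
    _ = B (a * b) := lip _ _

theorem mul_linv_cancel_right (lip : h.LeftInverseProperty)
    (aip : h.AutomorphicInverseProperty) (a x : Q) : a * x * linv h x = a :=
  linv_injective lip <| by rw [aip, aip, linv_linv lip, mul_linv_cancel_left lip]

theorem linv_mul_cancel_right (lip : h.LeftInverseProperty)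
    (aip : h.AutomorphicInverseProperty) (a x : Q) : a * linv h x * x = a := by
  simpa only [linv_linv lip] using mul_linv_cancel_right lip aip a (linv h x)

theorem automorphicInverseProperty_of_mIdentity (lip : h.LeftInverseProperty) {σ : Q → Q}
    (M : MIdentity σ) : h.AutomorphicInverseProperty := by
  intro x y
  refine h.mul_right_cancel (x := σ x) (h.mul_left_cancel (x := x * y) ?_)
  rw [mul_linv_cancel_left lip, M, mul_linv_cancel_left lip, mul_linv_cancel lip, h.one_mul]

theorem automorphicInverseProperty_of_rightBol (lip : h.LeftInverseProperty) {σ : Q → Q}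
    (bol : RightBol σ) : h.AutomorphicInverseProperty := by
  intro x y
  refine linv_eq_of_mul_eq_one lip (h.mul_right_cancel (x := σ y) ?_)
  rw [bol, mul_linv_cancel_left lip, mul_linv_cancel_left lip, h.one_mul]

theorem rightBol_iff_mIdentity (lip : h.LeftInverseProperty)
    (aip : h.AutomorphicInverseProperty) (σ : Q → Q) :
    RightBol σ ↔ MIdentity σ := by
  constructor
  · intro bol y a b
    have shifted : ∀ u v : Q, u * linv h y * (y * v * σ y) = u * v * σ y := fun u v => by
      rw [← bol, linv_mul_cancel_right lip aip]
    have rotated := rotate_triple lip (A := (· * linv h y)) (C := (· * σ y)) shifted a b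
    rwa [aip, linv_linv lip, linv_linv lip] at rotated
  · intro M x y b
    have rotated := rotate_triple lip (A := (y * ·)) (B := (· * σ y)) (C := fun c => y * c * σ y)
      (M y) (x * y) b
    rw [aip, linv_linv lip, mul_linv_cancel_right lip aip] at rotated
    exact rotated.symm

end LeftInverseProperty

end IsLoop

open IsLoop in
/-- A loop is a σ-M-loop iff it is a σ-generalized right Bol loop with the
left inverse property. -/
theorem stmt9 {Q : Type*} [Mul Q] [One Q] (h : IsLoop Q) (σ : Q → Q) :
    (∀ x y z : Q, (x * y) * (z * σ x) = (x * (y * z)) * σ x) ↔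
      (RightBol σ ∧ ∀ x y : Q, linv h x * (x * y) = y) := by
  constructor
  · intro M
    have lip := h.leftInverseProperty_of_mIdentity M
    have aip := automorphicInverseProperty_of_mIdentity lip M
    exact ⟨(rightBol_iff_mIdentity lip aip σ).2 M, lip⟩
  · rintro ⟨bol, lip⟩
    exact (rightBol_iff_mIdentity lip (automorphicInverseProperty_of_rightBol lip bol) σ).1 bol
end

section
/- Let (Q,·) be a σ-generalized Bol loop satisfying σ(x^{-1}) = (σ(x))^{-1} and the σ-flexible law (x·y)·σ(x) = x·(y·σ(x)) for all x,y. If α ∈ BS(Q,·) and α = ψ R_x^{-1} with ψ fixing the identity, then ψ is a pseudo-automorphism with companion (x^{-1}·g^{-1})·(σ(x))^{-1} for some g ∈ Q. -/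
/-!
Proof idea: the σ-Bol identity says exactly that `(R_q, L_q⁻¹ R_{σq}⁻¹, R_{σq}⁻¹)` is an
autotopism for every `q`, and it gives the right inverse property, so `R_q⁻¹ = R_{q^ρ}`.
Composing the autotopism `(R_g⁻¹ α, L_f⁻¹ α, α)` witnessing `α ∈ BS(Q,·)` with these
autotopisms for `q = g` and then `q = x` yields an autotopism `(ψ, B, C)` with
`C u = ((ψ u · x^ρ) · σ(g)^ρ) · σ(x)^ρ`. Since `σ(x)^ρ = σ(x^ρ)`, one more Bol step gives
`C = R_c ψ` with `c = (x^ρ · σ(g)^ρ) · σ(x)^ρ`, and evaluating at `1` (where `ψ 1 = 1`)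
forces `B = C`: so `(ψ, R_c ψ, R_c ψ)` is an autotopism.
-/

namespace Autotopism

variable {Q : Type*} [Mul Q]

theorem mul {A B C A' B' C' : Equiv.Perm Q} (h' : Autotopism A' B' C')
    (h : Autotopism A B C) : Autotopism (A' * A) (B' * B) (C' * C) := by
  intro u v
  simp only [Equiv.Perm.mul_apply, h' (A u), h u v]

theorem snd_eq_thd [One Q] (hQ : IsLoop Q) {A B C : Equiv.Perm Q}
    (h : Autotopism A B C) (hA : A 1 = 1) : B = C := by
  ext y
  simpa only [hA, hQ.one_mul] using h 1 y

end Autotopism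

namespace IsLoop

variable {Q : Type*} [Mul Q] [One Q] (h : IsLoop Q)

theorem mul_rinv (q : Q) : q * rinv h q = 1 :=
  (Lt h q).apply_symm_apply 1

section RightBol

variable {σ : Q → Q}

theorem mul_mul_rinv_of_rightBol (hB : RightBol σ) (u q : Q) : u * q * rinv h q = u := by
  have hb := hB u q (rinv h q)
  rw [h.mul_rinv q, h.one_mul] at hb
  exact (h.rbij (σ q)).1 hb

theorem mul_rinv_mul_of_rightBol (hB : RightBol σ) (u q : Q) : u * rinv h q * q = u :=
  (h.rbij (rinv h q)).1 (h.mul_mul_rinv_of_rightBol hB (u * rinv h q) q)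

theorem Rt_symm_apply_of_rightBol (hB : RightBol σ) (q y : Q) :
    (Rt h q).symm y = y * rinv h q :=
  (Rt h q).symm_apply_eq.mpr (h.mul_rinv_mul_of_rightBol hB y q).symm

theorem autotopism_of_rightBol (hB : RightBol σ) (q : Q) :
    Autotopism (Rt h q) ((Lt h q).symm * (Rt h (σ q)).symm) (Rt h (σ q)).symm := by
  intro p w
  rw [Equiv.Perm.mul_apply, Rt_symm_apply_of_rightBol h hB, Rt_symm_apply_of_rightBol h hB]
  set v := (Lt h q).symm (w * rinv h (σ q))
  have hqv : q * v = w * rinv h (σ q) := (Lt h q).apply_symm_apply _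
  have hbol := hB p q v
  rw [hqv, h.mul_rinv_mul_of_rightBol hB] at hbol
  rw [← hbol, h.mul_mul_rinv_of_rightBol hB]
  rfl

theorem mul_rinv_mul_mul_rinv_of_rightBol (hB : RightBol σ) {x : Q}
    (hσ : σ (rinv h x) = rinv h (σ x)) (u z : Q) :
    u * rinv h x * z * rinv h (σ x) = u * (rinv h x * z * rinv h (σ x)) := by
  simpa only [hσ] using hB u (rinv h x) z

end RightBol

end IsLoop

theorem stmt17_general {Q : Type*} [Mul Q] [One Q] (h : IsLoop Q) (σ : Q → Q)
    (hB : RightBol σ)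
    (hσinv : ∀ x : Q, σ (rinv h x) = rinv h (σ x))
    (α : Equiv.Perm Q)
    (hBS : ∃ f g : Q, ∀ a b : Q,
      (Rt h g).symm (α a) * (Lt h f).symm (α b) = α (a * b))
    (ψ : Equiv.Perm Q) (x : Q) (hψ : ψ 1 = 1)
    (hdec : ∀ y : Q, α y = (Rt h x).symm (ψ y)) :
    ∃ g : Q, ∀ a b : Q,
      ψ a * (ψ b * ((rinv h x * rinv h g) * rinv h (σ x))) =
        ψ (a * b) * ((rinv h x * rinv h g) * rinv h (σ x)) := by
  obtain ⟨f, g, hfg⟩ := hBS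
  have hα : α = (Rt h x).symm * ψ := Equiv.ext hdec
  have hBSα : Autotopism ((Rt h g).symm * α) ((Lt h f).symm * α) α := hfg
  have hT := (h.autotopism_of_rightBol hB x).mul ((h.autotopism_of_rightBol hB g).mul hBSα)
  set c := rinv h x * rinv h (σ g) * rinv h (σ x)
  have hfst : Rt h x * (Rt h g * ((Rt h g).symm * α)) = ψ := by
    ext u
    simp only [hα, Equiv.Perm.mul_apply, Equiv.apply_symm_apply]
  have hthd : (Rt h (σ x)).symm * ((Rt h (σ g)).symm * α) = Rt h c * ψ := by
    ext u
    simp only [hα, Equiv.Perm.mul_apply, h.Rt_symm_apply_of_rightBol hB]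
    exact h.mul_rinv_mul_mul_rinv_of_rightBol hB (hσinv x) (ψ u) (rinv h (σ g))
  rw [hfst, hthd] at hT
  rw [hT.snd_eq_thd h hψ] at hT
  exact ⟨σ g, hT⟩

/-- In a σ-generalized Bol loop with `σ(x⁻¹) = σ(x)⁻¹` and the σ-flexible law,
if `α = ψ R_x⁻¹ ∈ BS(Q,·)` with `ψ` fixing the identity, then `ψ` is a
pseudo-automorphism with companion `(x⁻¹·g⁻¹)·σ(x)⁻¹` for some `g`. -/
theorem stmt17 {Q : Type*} [Mul Q] [One Q] (h : IsLoop Q) (σ : Q → Q)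
    (hB : RightBol σ)
    (hσinv : ∀ x : Q, σ (rinv h x) = rinv h (σ x))
    (hflex : ∀ x y : Q, (x * y) * σ x = x * (y * σ x))
    (α : Equiv.Perm Q)
    (hBS : ∃ f g : Q, ∀ a b : Q,
      (Rt h g).symm (α a) * (Lt h f).symm (α b) = α (a * b))
    (ψ : Equiv.Perm Q) (x : Q) (hψ : ψ 1 = 1)
    (hdec : ∀ y : Q, α y = (Rt h x).symm (ψ y)) :
    ∃ g : Q, ∀ a b : Q,
      ψ a * (ψ b * ((rinv h x * rinv h g) * rinv h (σ x))) =
        ψ (a * b) * ((rinv h x * rinv h g) * rinv h (σ x)) :=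
  stmt17_general h σ hB hσinv α hBS ψ x hψ hdec
end
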